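/- arXiv:2110.10840 — 2 statements merged into one kernel-verified Lean document; each statement's English description precedes it below -/
import Mathlib

section
/- Let B = {x ∈ ℝⁿ : ‖x‖ = 1} be the unit sphere and T be inversion in the sphere of center α with ‖α‖ ≠ 1 and radius r > 0. Setting λ = ‖α‖² - 1, T(B \ {α}) is contained in the sphere of center (1 - r²/λ)·α and radius r²/|λ|. -/
/-!
Inversion centred at `a` sends a sphere `S(c, ρ)` not through `a` to a sphere. Writing
`u = x - a`, `w = c - a`, the image of `x` lies at `(R² / ‖u‖²) u` from `a`, and for `x` on the
sphere `2⟪u, w⟫ = ‖u‖² + λ` with `λ = ‖w‖² - ρ²` the power of `a`. Expanding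
`‖(R² / ‖u‖²) u - (R² / λ) w‖²` with this identity leaves `R⁴ ρ² / λ²`, independent of `x`.
-/

open EuclideanGeometry Metric AffineMap

section

variable {V P : Type*} [NormedAddCommGroup V] [InnerProductSpace ℝ V] [MetricSpace P]
  [NormedAddTorsor V P]

theorem norm_div_sq_smul_sub_div_smul_of_norm_sub_eq {u w : V} {ρ : ℝ} (R : ℝ)
    (hu : ‖u - w‖ = ρ) (hw : ‖w‖ ≠ ρ) :
    ‖(R / ‖u‖) ^ 2 • u - (R ^ 2 / (‖w‖ ^ 2 - ρ ^ 2)) • w‖ = R ^ 2 * ρ / |‖w‖ ^ 2 - ρ ^ 2| := by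
  have hρ : 0 ≤ ρ := hu ▸ norm_nonneg _
  have hpow : ‖w‖ ^ 2 - ρ ^ 2 ≠ 0 :=
    sub_ne_zero.2 fun h ↦ hw ((sq_eq_sq₀ (norm_nonneg _) hρ).1 h)
  have hu0 : ‖u‖ ≠ 0 := by
    rintro h
    rw [norm_eq_zero.1 h, zero_sub, norm_neg] at hu
    exact hw hu
  have hinner : 2 * inner ℝ u w = ‖u‖ ^ 2 + ‖w‖ ^ 2 - ρ ^ 2 := by
    rw [← hu, norm_sub_sq_real]; ring
  refine (sq_eq_sq₀ (norm_nonneg _) (by positivity)).1 ?_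
  simp only [norm_sub_sq_real, norm_smul, real_inner_smul_left, real_inner_smul_right,
    Real.norm_eq_abs, mul_pow, div_pow, sq_abs]
  field_simp
  linear_combination (-R ^ 4 * (‖w‖ ^ 2 - ρ ^ 2)) * hinner

theorem inversion_mem_sphere_of_mem_sphere {a c x : P} {ρ : ℝ} (R : ℝ) (hx : x ∈ sphere c ρ)
    (ha : dist a c ≠ ρ) :
    inversion a R x ∈ sphere (lineMap a c (R ^ 2 / (dist a c ^ 2 - ρ ^ 2)))
      (R ^ 2 * ρ / |dist a c ^ 2 - ρ ^ 2|) := by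
  rw [dist_comm a c] at ha ⊢
  rw [Metric.mem_sphere, dist_eq_norm_vsub V, ← vsub_sub_vsub_cancel_right _ _ a,
    inversion_vsub_center, lineMap_vsub_left, dist_eq_norm_vsub V x a, dist_eq_norm_vsub V c a]
  refine norm_div_sq_smul_sub_div_smul_of_norm_sub_eq R ?_ (by rwa [← dist_eq_norm_vsub V])
  rw [vsub_sub_vsub_cancel_right, ← dist_eq_norm_vsub V, Metric.mem_sphere.1 hx]

end

theorem inversion_image_unit_sphere_general {n : ℕ}
    (α : EuclideanSpace ℝ (Fin n)) (r : ℝ) (hα : ‖α‖ ≠ 1)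
    (T : EuclideanSpace ℝ (Fin n) → EuclideanSpace ℝ (Fin n))
    (hT : ∀ x, T x = α + (r ^ 2 / ‖x - α‖ ^ 2) • (x - α))
    (lam : ℝ) (hlam : lam = ‖α‖ ^ 2 - 1) :
    ∀ x : EuclideanSpace ℝ (Fin n), ‖x‖ = 1 → x ≠ α →
      T x ∈ Metric.sphere ((1 - r ^ 2 / lam) • α) (r ^ 2 / |lam|) := by
  intro x hx _
  have hTx : T x = inversion α r x := by
    rw [hT, inversion_eq_lineMap, lineMap_apply_module', dist_eq_norm, div_pow, add_comm]
  have hS := inversion_mem_sphere_of_mem_sphere r (mem_sphere_zero_iff_norm.2 hx)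
    (by rwa [dist_zero_right])
  rwa [lineMap_apply_module, smul_zero, add_zero, dist_zero_right, one_pow, mul_one, ← hlam,
    ← hTx] at hS

/-- If `B` is the unit sphere and `T` is inversion in the sphere of center `α` with
`‖α‖ ≠ 1` and radius `r > 0`, then with `λ = ‖α‖² - 1`, `T(B \ {α})` is contained in
the sphere of center `(1 - r²/λ) • α` and radius `r²/|λ|`. -/
theorem inversion_image_unit_sphere {n : ℕ}
    (α : EuclideanSpace ℝ (Fin n)) (r : ℝ) (hr : 0 < r) (hα : ‖α‖ ≠ 1)
    (T : EuclideanSpace ℝ (Fin n) → EuclideanSpace ℝ (Fin n))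
    (hT : ∀ x, T x = α + (r ^ 2 / ‖x - α‖ ^ 2) • (x - α))
    (lam : ℝ) (hlam : lam = ‖α‖ ^ 2 - 1) :
    ∀ x : EuclideanSpace ℝ (Fin n), ‖x‖ = 1 → x ≠ α →
      T x ∈ Metric.sphere ((1 - r ^ 2 / lam) • α) (r ^ 2 / |lam|) :=
  inversion_image_unit_sphere_general α r hα T hT lam hlam
end

section
/- Let P(x) denote the projection of x ∈ 𝒮₋ onto the nearest face of 𝒮₋ (with ties broken by choosing the largest face index). Then the map x ↦ T_{P(x),√2}(x), sending each point to its inversion in the sphere of center P(x) and radius √2, is injective on the interior of 𝒮₋. -/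
/-!
The corner simplex is the intersection of half-spaces `c j ≤ ⟪ν j, w⟫` whose unit inward normals
make pairwise non-acute angles, `⟪ν j, ν k⟫ ≤ 0`. For such a polyhedron the foot of the
perpendicular from a point `x` of it to any facet hyperplane stays in the polyhedron, so by
Pythagoras the nearest boundary point of an interior `x` is `α = x - a • ν j` for some facet `j`,
and inversion in the sphere about `α` of radius `r` sends `x` to `α + (r ^ 2 / a) • ν j`.
If two points have the same facet, the `ν j`-components of their images force equal `a` and `α`.
If the facets differ, obtuseness gives `‖α - β‖ ^ 2 ≥ r ^ 4 / a ^ 2 + r ^ 4 / b ^ 2 ≥ 2 r ^ 4 / D`,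
which exceeds the squared diameter `D` as soon as `D ^ 2 < 2 r ^ 4`; for the corner simplex
`D = 2` and `r ^ 2 = 2`.
-/

open RealInnerProductSpace EuclideanGeometry

section InnerProductSpace

variable {E : Type*} [NormedAddCommGroup E] [InnerProductSpace ℝ E]

theorem eq_of_norm_sub_le_of_inner_eq_zero {x α q : E} (hle : ‖x - α‖ ≤ ‖x - q‖)
    (horth : ⟪x - q, q - α⟫ = 0) : α = q := by
  have hpyth := norm_add_sq_eq_norm_sq_add_norm_sq_real horth
  rw [sub_add_sub_cancel] at hpyth
  have : ‖q - α‖ = 0 := by nlinarith [norm_nonneg (x - α), norm_nonneg (x - q), norm_nonneg (q - α)]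
  exact (sub_eq_zero.mp (norm_eq_zero.mp this)).symm

theorem inversion_eq_add_smul {α x ν : E} {a : ℝ} (r : ℝ) (hν : ‖ν‖ = 1) (ha : 0 < a)
    (hx : x = α + a • ν) : inversion α r x = α + (r ^ 2 / a) • ν := by
  have hdist : dist x α = a := by
    rw [hx, dist_eq_norm, add_sub_cancel_left, norm_smul, hν, mul_one, Real.norm_of_nonneg ha.le]
  rw [inversion, hdist, hx, vadd_eq_add, vsub_eq_sub, add_sub_cancel_left, smul_smul, add_comm]
  congr 2
  field_simp

theorem eq_and_eq_of_add_smul_eq_add_smul {α β ν : E} {s t : ℝ} (hν : ‖ν‖ = 1)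
    (hαβ : ⟪ν, α⟫ = ⟪ν, β⟫) (h : α + s • ν = β + t • ν) : α = β ∧ s = t := by
  have hst : s = t := by
    have := congrArg (⟪ν, ·⟫) h
    simp only [inner_add_right, real_inner_smul_right, real_inner_self_eq_norm_sq, hν, hαβ] at this
    linarith
  subst hst
  exact ⟨add_right_cancel h, rfl⟩

theorem sq_add_sq_le_norm_smul_sub_smul_sq {u v : E} (hu : ‖u‖ = 1) (hv : ‖v‖ = 1)
    (huv : ⟪u, v⟫ ≤ 0) {s t : ℝ} (hs : 0 ≤ s) (ht : 0 ≤ t) :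
    s ^ 2 + t ^ 2 ≤ ‖s • u - t • v‖ ^ 2 := by
  rw [norm_sub_sq_real, norm_smul, norm_smul, hu, hv, real_inner_smul_left,
    real_inner_smul_right, Real.norm_of_nonneg hs, Real.norm_of_nonneg ht]
  nlinarith [mul_nonneg hs ht]

end InnerProductSpace

section Polyhedron

variable {E : Type*} [NormedAddCommGroup E] [InnerProductSpace ℝ E] {ι : Type*}

def polyhedron (ν : ι → E) (c : ι → ℝ) : Set E := {w | ∀ j, c j ≤ ⟪ν j, w⟫}

variable {ν : ι → E} {c : ι → ℝ}

theorem isClosed_polyhedron : IsClosed (polyhedron ν c) := by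
  simp only [polyhedron, Set.ofPred_forall]
  exact isClosed_iInter fun j => isClosed_le continuous_const (continuous_const.inner continuous_id)

theorem lt_inner_of_mem_interior_polyhedron {j : ι} (hν : ‖ν j‖ = 1) {x : E}
    (hx : x ∈ interior (polyhedron ν c)) : c j < ⟪ν j, x⟫ := by
  obtain ⟨ε, hε, hball⟩ := Metric.mem_nhds_iff.mp (mem_interior_iff_mem_nhds.mp hx)
  have hmem : x - (ε / 2) • ν j ∈ polyhedron ν c := hball <| by
    rw [Metric.mem_ball, dist_eq_norm, sub_sub_cancel_left, norm_neg, norm_smul, hν,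
      Real.norm_of_nonneg (by positivity)]
    linarith
  have := hmem j
  rw [inner_sub_right, real_inner_smul_right, real_inner_self_eq_norm_sq, hν] at this
  linarith

theorem exists_inner_eq_of_mem_frontier_polyhedron [Finite ι] {α : E}
    (hα : α ∈ frontier (polyhedron ν c)) : ∃ j, ⟪ν j, α⟫ = c j := by
  rw [isClosed_polyhedron.frontier_eq] at hα
  obtain ⟨hαP, hαint⟩ := hα
  by_contra! hne
  have hopen : IsOpen {w : E | ∀ j, c j < ⟪ν j, w⟫} := by
    simp only [Set.ofPred_forall]
    exact isOpen_iInter_of_finite fun j =>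
      isOpen_lt continuous_const (continuous_const.inner continuous_id)
  exact hαint <| interior_maximal (fun w hw j => (hw j).le) hopen
    fun j => (hαP j).lt_of_ne (hne j).symm

theorem inner_sub_smul_eq {j : ι} (hν : ‖ν j‖ = 1) (x : E) :
    ⟪ν j, x - (⟪ν j, x⟫ - c j) • ν j⟫ = c j := by
  rw [inner_sub_right, real_inner_smul_right, real_inner_self_eq_norm_sq, hν]
  ring

theorem sub_smul_mem_polyhedron (hν : ∀ j, ‖ν j‖ = 1)
    (hobtuse : Pairwise fun j k => ⟪ν j, ν k⟫ ≤ 0) {x : E} (hx : x ∈ polyhedron ν c) (j : ι) :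
    x - (⟪ν j, x⟫ - c j) • ν j ∈ polyhedron ν c := by
  intro k
  rcases eq_or_ne k j with rfl | hkj
  · exact (inner_sub_smul_eq (hν k) x).ge
  · rw [inner_sub_right, real_inner_smul_right]
    nlinarith [hx j, hx k, hobtuse hkj]

theorem mem_frontier_polyhedron {j : ι} (hν : ‖ν j‖ = 1) {w : E} (hw : w ∈ polyhedron ν c)
    (hwj : ⟪ν j, w⟫ = c j) : w ∈ frontier (polyhedron ν c) := by
  rw [isClosed_polyhedron.frontier_eq]
  exact ⟨hw, fun hint => (lt_inner_of_mem_interior_polyhedron hν hint).ne' hwj⟩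

theorem exists_eq_add_smul_of_isNearest [Finite ι] (hν : ∀ j, ‖ν j‖ = 1)
    (hobtuse : Pairwise fun j k => ⟪ν j, ν k⟫ ≤ 0) {x α : E}
    (hx : x ∈ interior (polyhedron ν c)) (hα : α ∈ frontier (polyhedron ν c))
    (hmin : ∀ y ∈ frontier (polyhedron ν c), ‖x - α‖ ≤ ‖x - y‖) :
    ∃ j, ⟪ν j, α⟫ = c j ∧ ∃ a : ℝ, 0 < a ∧ x = α + a • ν j := by
  obtain ⟨j, hαj⟩ := exists_inner_eq_of_mem_frontier_polyhedron hα
  set a := ⟪ν j, x⟫ - c j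
  set q := x - a • ν j
  have hq : q ∈ frontier (polyhedron ν c) := mem_frontier_polyhedron (hν j)
    (sub_smul_mem_polyhedron hν hobtuse (interior_subset hx) j) (inner_sub_smul_eq (hν j) x)
  have horth : ⟪x - q, q - α⟫ = 0 := by
    rw [sub_sub_cancel, real_inner_smul_left, inner_sub_right, inner_sub_smul_eq (hν j), hαj,
      sub_self, mul_zero]
  have hαq : α = q := eq_of_norm_sub_le_of_inner_eq_zero (hmin q hq) horth
  refine ⟨j, hαj, a, sub_pos.mpr (lt_inner_of_mem_interior_polyhedron (hν j) hx), ?_⟩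
  rw [hαq, sub_add_cancel]

theorem injOn_inversion_of_isNearest [Finite ι] (hν : ∀ j, ‖ν j‖ = 1)
    (hobtuse : Pairwise fun j k => ⟪ν j, ν k⟫ ≤ 0) {D r : ℝ}
    (hdiam : ∀ u ∈ polyhedron ν c, ∀ v ∈ polyhedron ν c, ‖u - v‖ ^ 2 ≤ D) (hr : D ^ 2 < 2 * r ^ 4)
    {P : E → E} (hP : ∀ x ∈ interior (polyhedron ν c), P x ∈ frontier (polyhedron ν c) ∧
      ∀ y ∈ frontier (polyhedron ν c), ‖x - P x‖ ≤ ‖x - y‖) :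
    Set.InjOn (fun x => inversion (P x) r x) (interior (polyhedron ν c)) := by
  intro x hx y hy hxy
  obtain ⟨j, hj, a, ha, hxa⟩ :=
    exists_eq_add_smul_of_isNearest hν hobtuse hx (hP x hx).1 (hP x hx).2
  obtain ⟨k, hk, b, hb, hyb⟩ :=
    exists_eq_add_smul_of_isNearest hν hobtuse hy (hP y hy).1 (hP y hy).2
  have himage : P x + (r ^ 2 / a) • ν j = P y + (r ^ 2 / b) • ν k := by
    rw [← inversion_eq_add_smul r (hν j) ha hxa, ← inversion_eq_add_smul r (hν k) hb hyb]
    exact hxy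
  have hr0 : r ≠ 0 := by rintro rfl; nlinarith
  rcases eq_or_ne j k with rfl | hjk
  · obtain ⟨hPxy, hab⟩ := eq_and_eq_of_add_smul_eq_add_smul (hν j) (hj.trans hk.symm) himage
    have hab : a = b := by
      field_simp at hab
      exact hab.symm
    rw [hxa, hyb, hPxy, hab]
  · exfalso
    have hPx : P x ∈ polyhedron ν c := isClosed_polyhedron.frontier_subset (hP x hx).1
    have hPy : P y ∈ polyhedron ν c := isClosed_polyhedron.frontier_subset (hP y hy).1
    have hPdiff : P x - P y = (r ^ 2 / b) • ν k - (r ^ 2 / a) • ν j := by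
      rw [sub_eq_sub_iff_add_eq_add, himage, add_comm]
    have hfar : (r ^ 2 / b) ^ 2 + (r ^ 2 / a) ^ 2 ≤ ‖P x - P y‖ ^ 2 := hPdiff ▸
      sq_add_sq_le_norm_smul_sub_smul_sq (hν k) (hν j) (hobtuse hjk.symm) (by positivity)
        (by positivity)
    have hnear : ‖P x - P y‖ ^ 2 ≤ D := hdiam _ hPx _ hPy
    have ha2 : a ^ 2 ≤ D := by
      have := hdiam _ (interior_subset hx) _ hPx
      rwa [sub_eq_of_eq_add' hxa, norm_smul, hν j, mul_one, Real.norm_of_nonneg ha.le] at this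
    have hb2 : b ^ 2 ≤ D := by
      have := hdiam _ (interior_subset hy) _ hPy
      rwa [sub_eq_of_eq_add' hyb, norm_smul, hν k, mul_one, Real.norm_of_nonneg hb.le] at this
    have hsa : (r ^ 2 / a) ^ 2 * a ^ 2 = r ^ 4 := by field_simp
    have hsb : (r ^ 2 / b) ^ 2 * b ^ 2 = r ^ 4 := by field_simp
    nlinarith [sq_nonneg (r ^ 2 / a), sq_nonneg (r ^ 2 / b)]

end Polyhedron

section CornerSimplex

variable {n : ℕ}

def cornerSimplex (n : ℕ) : Set (EuclideanSpace ℝ (Fin n)) :=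
  {x | (∀ i, 0 ≤ x i) ∧ ∑ i, x i ≤ 1}

/-- `some j` indexes the face `W_j = {x_j = 0}` and `none` the face `W_{n+1} = {∑ i, x i = 1}`;
with the levels `cornerLevel n` these unit inward normals cut out `cornerSimplex n`. For `n = 0`
the normal `cornerNormal 0 none` is `0`. -/
noncomputable def cornerNormal (n : ℕ) : Option (Fin n) → EuclideanSpace ℝ (Fin n)
  | some i => EuclideanSpace.single i 1
  | none => WithLp.toLp 2 fun _ => -(√n)⁻¹

noncomputable def cornerLevel (n : ℕ) : Option (Fin n) → ℝ
  | some _ => 0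
  | none => -(√n)⁻¹

theorem inner_cornerNormal_some (i : Fin n) (w : EuclideanSpace ℝ (Fin n)) :
    ⟪cornerNormal n (some i), w⟫ = w i := by
  simp [cornerNormal, EuclideanSpace.inner_single_left]

theorem inner_cornerNormal_none (w : EuclideanSpace ℝ (Fin n)) :
    ⟪cornerNormal n none, w⟫ = -(√n)⁻¹ * ∑ i, w i := by
  simp [cornerNormal, PiLp.inner_apply, Finset.sum_mul, mul_comm]

theorem norm_cornerNormal (hn : 0 < n) (j : Option (Fin n)) : ‖cornerNormal n j‖ = 1 := by
  cases j with
  | some i => simp [cornerNormal]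
  | none =>
    have hsqrt : √(n : ℝ) ≠ 0 := Real.sqrt_ne_zero'.mpr (Nat.cast_pos.mpr hn)
    simp [EuclideanSpace.norm_eq, cornerNormal, hsqrt]

theorem pairwise_inner_cornerNormal_nonpos :
    Pairwise fun j k => ⟪cornerNormal n j, cornerNormal n k⟫ ≤ 0 := by
  have hneg : -(√(n : ℝ))⁻¹ ≤ 0 := neg_nonpos.mpr (by positivity)
  rintro (_ | i) (_ | k) hjk
  · exact absurd rfl hjk
  · rw [real_inner_comm, inner_cornerNormal_some]; exact hneg
  · rw [inner_cornerNormal_some]; exact hneg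
  · rw [inner_cornerNormal_some]
    simp [cornerNormal, Ne.symm (Option.some_injective _ |>.ne_iff.mp hjk)]

theorem cornerSimplex_eq_polyhedron :
    cornerSimplex n = polyhedron (cornerNormal n) (cornerLevel n) := by
  ext x
  simp only [cornerSimplex, Set.mem_ofPred_eq, polyhedron, Option.forall, cornerLevel,
    inner_cornerNormal_some, inner_cornerNormal_none, and_comm]
  refine and_congr_left' ?_
  rcases Nat.eq_zero_or_pos n with rfl | hn
  · simp
  · rw [neg_mul, neg_le_neg_iff, mul_le_iff_le_one_right (by positivity)]

theorem norm_sq_le_one_of_mem_cornerSimplex {x : EuclideanSpace ℝ (Fin n)}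
    (hx : x ∈ cornerSimplex n) : ‖x‖ ^ 2 ≤ 1 := by
  rw [EuclideanSpace.real_norm_sq_eq]
  calc ∑ i, x i ^ 2 ≤ (∑ i, x i) ^ 2 := Finset.sum_sq_le_sq_sum_of_nonneg fun i _ => hx.1 i
    _ ≤ 1 := pow_le_one₀ (Finset.sum_nonneg fun i _ => hx.1 i) hx.2

theorem norm_sub_sq_le_two_of_mem_cornerSimplex {x y : EuclideanSpace ℝ (Fin n)}
    (hx : x ∈ cornerSimplex n) (hy : y ∈ cornerSimplex n) :
    ‖x - y‖ ^ 2 ≤ 2 := by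
  have hxy : 0 ≤ ⟪x, y⟫ := by
    rw [PiLp.inner_apply]
    exact Finset.sum_nonneg fun i _ => mul_nonneg (hy.1 i) (hx.1 i)
  rw [norm_sub_sq_real]
  linarith [norm_sq_le_one_of_mem_cornerSimplex hx, norm_sq_le_one_of_mem_cornerSimplex hy]

end CornerSimplex

/-- Let `P x` be a nearest-point projection of `x` onto the boundary of the corner
simplex `𝒮₋` (a well-defined selection, e.g. with ties broken by face index). Then the
map `x ↦ T_{P(x),√2}(x)`, inverting each point in the sphere of center `P x` and radius
`√2`, is injective on the interior of `𝒮₋`. -/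
theorem spins_map_injective_on_interior {n : ℕ}
    (S : Set (EuclideanSpace ℝ (Fin n)))
    (hS : S = {x | (∀ i, 0 ≤ x i) ∧ ∑ i, x i ≤ 1})
    (P : EuclideanSpace ℝ (Fin n) → EuclideanSpace ℝ (Fin n))
    (hP : ∀ x ∈ interior S,
      P x ∈ frontier S ∧ ∀ y ∈ frontier S, ‖x - P x‖ ≤ ‖x - y‖)
    (T : EuclideanSpace ℝ (Fin n) → EuclideanSpace ℝ (Fin n) → EuclideanSpace ℝ (Fin n))
    (hT : ∀ α x, T α x = α + ((Real.sqrt 2) ^ 2 / ‖x - α‖ ^ 2) • (x - α)) :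
    Set.InjOn (fun x => T (P x) x) (interior S) := by
  rcases Nat.eq_zero_or_pos n with rfl | hn
  · exact Set.subsingleton_of_subsingleton.injOn _
  have hT' : T = fun α x => inversion α (√2) x := by
    funext α x
    rw [hT, inversion, dist_eq_norm, div_pow, vsub_eq_sub, vadd_eq_add, add_comm]
  subst hT'
  obtain rfl : S = polyhedron (cornerNormal n) (cornerLevel n) :=
    hS.trans cornerSimplex_eq_polyhedron
  refine injOn_inversion_of_isNearest (norm_cornerNormal hn) pairwise_inner_cornerNormal_nonpos
    (D := 2) (fun u hu v hv => ?_) (by nlinarith [Real.sq_sqrt zero_le_two]) hP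
  rw [← cornerSimplex_eq_polyhedron] at hu hv
  exact norm_sub_sq_le_two_of_mem_cornerSimplex hu hv
end
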